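/- Let (A,B) be nonnegative random variables admitting a (ρ,H)-local dependence measure g, and suppose c > 0 satisfies φ_ρ(c) > c. Then there exists a nonnegative random variable Z_c, independent of (A,B), such that -log P(Z_c < ε) ∼ c·H(ε) as ε → 0+, and AZ_c + B ≥_st Z_c (i.e. P(AZ_c+B ≤ x) ≤ P(Z_c ≤ x) for all x). -/

import Mathlib

open MeasureTheory ProbabilityTheory Filter Set Topology
open scoped ENNReal

/-- `-log p`, valued in `[0,∞]`, with the convention `-log 0 = ∞`. -/
noncomputable def negLog (p : ℝ≥0∞) : ℝ≥0∞ :=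
  if p = 0 then ⊤ else ENNReal.ofReal (-Real.log p.toReal)

/-- `H` is positive, continuous and strictly decreasing on `(0,∞)`, and regularly
varying at `0` with index `-ρ < 0`. -/
structure IsRVatZero (H : ℝ → ℝ) (ρ : ℝ) : Prop where
  rho_pos : 0 < ρ
  pos : ∀ x ∈ Set.Ioi (0:ℝ), 0 < H x
  contOn : ContinuousOn H (Set.Ioi 0)
  anti : StrictAntiOn H (Set.Ioi 0)
  rv : ∀ y ∈ Set.Ioi (0:ℝ),
    Filter.Tendsto (fun x => H (y * x) / H x) (nhdsWithin 0 (Set.Ioi 0)) (nhds (y ^ (-ρ)))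

/-- `X` is an `IED^ρ_H(l)`-random variable with respect to `μ`:
`lim_{ε→0⁺} (-log P(X < ε))/H(ε) = l`. -/
def IsIED {Ω : Type*} [MeasurableSpace Ω] (μ : Measure Ω) (X : Ω → ℝ)
    (H : ℝ → ℝ) (l : ℝ≥0∞) : Prop :=
  Filter.Tendsto (fun ε => negLog (μ {ω | X ω < ε}) / ENNReal.ofReal (H ε))
    (nhdsWithin 0 (Set.Ioi 0)) (nhds l)

/-- `g` is the `(ρ,H)`-local dependence measure of the pair `(A,B)`:
`g(y) = lim_{ε→0⁺} (-log P(εAy + B < ε))/H(ε)` for every `y ≥ 0`. -/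
def IsLDM {Ω : Type*} [MeasurableSpace Ω] (μ : Measure Ω) (A B : Ω → ℝ)
    (H : ℝ → ℝ) (g : ℝ → ℝ≥0∞) : Prop :=
  ∀ y : ℝ, 0 ≤ y →
    Filter.Tendsto (fun ε => negLog (μ {ω | ε * A ω * y + B ω < ε}) / ENNReal.ofReal (H ε))
      (nhdsWithin 0 (Set.Ioi 0)) (nhds (g y))

/-- The Legendre-type transform `φ_ρ(λ) = inf_{y>0} { g(y) + λ/y^ρ }`. -/
noncomputable def phi (g : ℝ → ℝ≥0∞) (ρ : ℝ) (l : ℝ≥0∞) : ℝ≥0∞ :=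
  ⨅ y ∈ Set.Ioi (0:ℝ), (g y + l / ENNReal.ofReal (y ^ ρ))

/-- `λ* = inf_{y>1} { (y^ρ/(y^ρ-1)) g(y) }`. -/
noncomputable def lambdaStar (g : ℝ → ℝ≥0∞) (ρ : ℝ) : ℝ≥0∞ :=
  ⨅ y ∈ Set.Ioi (1:ℝ), ENNReal.ofReal (y ^ ρ / (y ^ ρ - 1)) * g y

lemma negLog_anti {p q : ℝ≥0∞} (h : p ≤ q) : negLog q ≤ negLog p := by
  unfold negLog
  rcases eq_or_ne p 0 with rfl | hp
  · simp
  rcases eq_or_ne q ⊤ with rfl | hq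
  · rw [if_neg (by simp), if_neg hp]
    simp
  have hq0 : q ≠ 0 := fun h0 => hp (le_antisymm (h0 ▸ h) (zero_le))
  rw [if_neg hq0, if_neg hp]
  apply ENNReal.ofReal_le_ofReal
  have hpt : p ≠ ⊤ := fun h0 => hq (top_le_iff.mp (h0 ▸ h))
  have h1 : 0 < p.toReal := ENNReal.toReal_pos hp hpt
  have h2 : p.toReal ≤ q.toReal := (ENNReal.toReal_le_toReal hpt hq).mpr h
  have := Real.log_le_log h1 h2
  linarith

lemma measure_le_of_negLog_ge {p : ℝ≥0∞} (hp : p ≤ 1) {u : ℝ}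
    (h : ENNReal.ofReal u ≤ negLog p) : p ≤ ENNReal.ofReal (Real.exp (-u)) := by
  rcases eq_or_ne p 0 with rfl | hp0
  · exact zero_le
  have hpt : p ≠ ⊤ := (hp.trans_lt ENNReal.one_lt_top).ne
  rcases le_or_gt u 0 with hu | hu
  · calc p ≤ 1 := hp
      _ ≤ ENNReal.ofReal (Real.exp (-u)) := by
          rw [show (1:ℝ≥0∞) = ENNReal.ofReal 1 by simp]
          exact ENNReal.ofReal_le_ofReal (Real.one_le_exp (by linarith))
  · unfold negLog at h
    rw [if_neg hp0] at h
    have h2 : u ≤ -Real.log p.toReal := by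
      rcases ENNReal.ofReal_le_ofReal_iff'.mp h with h' | h'
      · exact h'
      · linarith
    have hppos : 0 < p.toReal := ENNReal.toReal_pos hp0 hpt
    have h3 : p.toReal ≤ Real.exp (-u) := by
      rw [← Real.exp_log hppos]
      exact Real.exp_le_exp.2 (by linarith)
    calc p = ENNReal.ofReal p.toReal := (ENNReal.ofReal_toReal hpt).symm
      _ ≤ _ := ENNReal.ofReal_le_ofReal h3

lemma negLog_ofReal_exp {u : ℝ} : negLog (ENNReal.ofReal (Real.exp (-u))) = ENNReal.ofReal u := by
  unfold negLog
  rw [if_neg (ENNReal.ofReal_pos.mpr (Real.exp_pos _)).ne',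
    ENNReal.toReal_ofReal (Real.exp_pos _).le, Real.log_exp, neg_neg]

lemma rpow_neg_anti {a b ρ : ℝ} (ha : 0 < a) (hab : a ≤ b) (hρ : 0 ≤ ρ) :
    b ^ (-ρ) ≤ a ^ (-ρ) := by
  rw [Real.rpow_neg (ha.trans_le hab).le, Real.rpow_neg ha.le]
  exact inv_anti₀ (Real.rpow_pos_of_pos ha ρ) (Real.rpow_le_rpow ha.le hab hρ)

lemma IsRVatZero.tendsto_atTop {H : ℝ → ℝ} {ρ : ℝ} (hH : IsRVatZero H ρ) :
    Tendsto H (nhdsWithin 0 (Set.Ioi 0)) atTop := by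
  have h2 : (0:ℝ) < 1/2 := by norm_num
  have hrv := hH.rv (1/2) h2
  have hlim : 1 < ((1/2:ℝ)) ^ (-ρ) := by
    rw [Real.rpow_neg (by norm_num)]
    rw [one_lt_inv_iff₀]
    exact ⟨Real.rpow_pos_of_pos (by norm_num) _,
      Real.rpow_lt_one (by norm_num) (by norm_num) hH.rho_pos⟩
  obtain ⟨γ, hγ1, hγL⟩ := exists_between hlim
  have hev : ∀ᶠ x in nhdsWithin 0 (Set.Ioi 0), γ < H ((1/2) * x) / H x :=
    hrv.eventually_const_lt hγL
  obtain ⟨δ, hδ0, hδ⟩ : ∃ δ, 0 < δ ∧ ∀ x, x ∈ Ioo 0 δ → γ < H ((1/2) * x) / H x := by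
    rcases mem_nhdsGT_iff_exists_Ioo_subset.mp hev with ⟨u, hu, hsub⟩
    exact ⟨u, hu, fun x hx => hsub hx⟩
  have key : ∀ n : ℕ, γ ^ n * H (δ/2) ≤ H (δ/2 * (1/2)^n) := by
    intro n
    induction n with
    | zero => simp
    | succ n ih =>
      have hxpos : 0 < δ/2 * (1/2:ℝ)^n := by positivity
      have hxlt : δ/2 * (1/2:ℝ)^n < δ := by
        have h1 : ((1/2:ℝ))^n ≤ 1 := pow_le_one₀ (by norm_num) (by norm_num)
        nlinarith
      have hH1 := hδ _ ⟨hxpos, hxlt⟩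
      have hpos : 0 < H (δ/2 * (1/2:ℝ)^n) := hH.pos _ (mem_Ioi.mpr hxpos)
      have h3 : γ * H (δ/2*(1/2:ℝ)^n) < H (δ/2*(1/2:ℝ)^(n+1)) := by
        rw [lt_div_iff₀ hpos] at hH1
        have harg : (1/2) * (δ/2*(1/2:ℝ)^n) = δ/2*(1/2:ℝ)^(n+1) := by ring
        rw [harg] at hH1
        linarith
      have hγ0 : (0:ℝ) < γ := by linarith
      calc γ^(n+1) * H (δ/2) = γ * (γ^n * H (δ/2)) := by ring
        _ ≤ γ * H (δ/2*(1/2:ℝ)^n) := by nlinarith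
        _ ≤ H (δ/2*(1/2:ℝ)^(n+1)) := h3.le
  rw [Filter.tendsto_atTop]
  intro M
  have hδ2pos : 0 < H (δ/2) := hH.pos _ (mem_Ioi.mpr (by linarith))
  obtain ⟨n, hn⟩ : ∃ n, M ≤ γ^n * H (δ/2) := by
    obtain ⟨n, hn⟩ := pow_unbounded_of_one_lt (M / H (δ/2)) hγ1
    refine ⟨n, ?_⟩
    rw [div_lt_iff₀ hδ2pos] at hn
    nlinarith
  have hx₁pos : 0 < δ/2 * (1/2:ℝ)^n := by positivity
  filter_upwards [Ioo_mem_nhdsGT_of_mem (⟨le_refl 0, hx₁pos⟩ : (0:ℝ) ∈ Ico 0 _)] with x hx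
  have hle : H (δ/2 * (1/2:ℝ)^n) ≤ H x :=
    (hH.anti (mem_Ioi.mpr hx.1) (mem_Ioi.mpr hx₁pos) hx.2).le
  linarith [key n]


set_option maxHeartbeats 2000000 in
/-- Lemma `lem:Z`.
If `(A,B)` has `(ρ,H)`-LDM `g` and `c > 0` satisfies `φ_ρ(c) > c`, then there is a
nonnegative random variable `Z_c` (possibly on an enlarged probability space),
independent of (a copy of) `(A,B)`, with `-log P(Z_c < ε) ∼ c·H(ε)` as `ε → 0⁺`
and `A Z_c + B ≥_st Z_c`. -/
theorem stmt8 {Ω : Type*} [MeasurableSpace Ω] (μ : Measure Ω) [IsProbabilityMeasure μ]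
    (H : ℝ → ℝ) (ρ : ℝ) (hH : IsRVatZero H ρ)
    (A B : Ω → ℝ) (hA : Measurable A) (hB : Measurable B)
    (hA0 : ∀ᵐ ω ∂μ, 0 ≤ A ω) (hB0 : ∀ᵐ ω ∂μ, 0 ≤ B ω)
    (g : ℝ → ℝ≥0∞) (hg : IsLDM μ A B H g)
    (c : ℝ≥0∞) (hc0 : 0 < c) (hctop : c ≠ ⊤) (hc : c < phi g ρ c) :
    ∃ (Ω' : Type) (_ : MeasurableSpace Ω') (ν : Measure Ω'),
      IsProbabilityMeasure ν ∧
      ∃ A' B' Z : Ω' → ℝ, Measurable A' ∧ Measurable B' ∧ Measurable Z ∧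
        (∀ᵐ ω ∂ν, 0 ≤ Z ω) ∧
        IdentDistrib (fun ω => (A' ω, B' ω)) (fun ω => (A ω, B ω)) ν μ ∧
        IndepFun Z (fun ω => (A' ω, B' ω)) ν ∧
        -- `-log P(Z < ε) ∼ c H(ε)` as `ε → 0⁺`
        Filter.Tendsto (fun ε => negLog (ν {ω | Z ω < ε}) / (c * ENNReal.ofReal (H ε)))
          (nhdsWithin 0 (Set.Ioi 0)) (nhds 1) ∧
        -- `A Z + B ≥_st Z`
        (∀ x : ℝ, ν {ω | A' ω * Z ω + B' ω ≤ x} ≤ ν {ω | Z ω ≤ x}) := by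
  have hρ := hH.rho_pos
  have hρne : ρ ≠ 0 := hρ.ne'
  set cR := c.toReal with hcRdef
  have hcR0 : 0 < cR := ENNReal.toReal_pos hc0.ne' hctop
  have hcofReal : c = ENNReal.ofReal cR := (ENNReal.ofReal_toReal hctop).symm
  -- pointwise consequence of the infimum
  have hphile : ∀ w : ℝ, 0 < w → phi g ρ c ≤ g w + ENNReal.ofReal (cR * w ^ (-ρ)) := by
    intro w hw
    have h1 : phi g ρ c ≤ g w + c / ENNReal.ofReal (w ^ ρ) := by
      exact iInf₂_le w (mem_Ioi.mpr hw)
    have h2 : c / ENNReal.ofReal (w ^ ρ) = ENNReal.ofReal (cR * w ^ (-ρ)) := by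
      rw [hcofReal, ← ENNReal.ofReal_div_of_pos (Real.rpow_pos_of_pos hw ρ),
        Real.rpow_neg hw.le, div_eq_mul_inv]
    rw [← h2]; exact h1
  -- c₁
  obtain ⟨c₁', hcc₁', hc₁'φ⟩ := exists_between hc
  set c₁ := min c₁' (c+1) with hc₁def
  have hcc₁ : c < c₁ := lt_min hcc₁' (ENNReal.lt_add_right hctop one_ne_zero)
  have hc₁φ : c₁ < phi g ρ c := (min_le_left _ _).trans_lt hc₁'φ
  have hc₁top : c₁ ≠ ⊤ :=
    ne_top_of_le_ne_top (ENNReal.add_ne_top.mpr ⟨hctop, ENNReal.one_ne_top⟩) (min_le_right _ _)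
  set c₁R := c₁.toReal with hc₁Rdef
  have hcc₁R : cR < c₁R := (ENNReal.toReal_lt_toReal hctop hc₁top).mpr hcc₁
  set γ := c₁R - cR with hγdef
  have hγ0 : 0 < γ := by simp only [hγdef]; linarith
  set c₂ := cR + γ/2 with hc₂def
  have hc₂pos : 0 < c₂ := by positivity
  -- Δ
  set φ₂ := min (phi g ρ c) (c₁+1) with hφ₂def
  have hc₁φ₂ : c₁ < φ₂ := lt_min hc₁φ (ENNReal.lt_add_right hc₁top one_ne_zero)
  have hφ₂top : φ₂ ≠ ⊤ :=
    ne_top_of_le_ne_top (ENNReal.add_ne_top.mpr ⟨hc₁top, ENNReal.one_ne_top⟩) (min_le_right _ _)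
  set Δ := φ₂.toReal - c₁R with hΔdef
  have hΔ0 : 0 < Δ := by
    have := (ENNReal.toReal_lt_toReal hc₁top hφ₂top).mpr hc₁φ₂
    simp only [hΔdef]; linarith
  -- budget
  have hc₁2top : c₁ + 2 ≠ ⊤ := ENNReal.add_ne_top.mpr ⟨hc₁top, by norm_num⟩
  have budget : ∀ w : ℝ, 0 < w → c₁R + Δ ≤ (min (g w) (c₁+2)).toReal + cR * w ^ (-ρ) := by
    intro w hw
    have hrw : 0 ≤ cR * w^(-ρ) := by positivity
    have hΔ1 : Δ ≤ 1 := by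
      have h1 : φ₂ ≤ c₁ + 1 := min_le_right _ _
      have h2 := (ENNReal.toReal_le_toReal hφ₂top
        (ENNReal.add_ne_top.mpr ⟨hc₁top, ENNReal.one_ne_top⟩)).mpr h1
      rw [ENNReal.toReal_add hc₁top ENNReal.one_ne_top] at h2
      simp only [hΔdef]
      simp at h2
      linarith
    rcases le_or_gt (c₁+2) (g w) with hgw | hgw
    · rw [min_eq_right hgw]
      have h3 : (c₁+2).toReal = c₁R + 2 := by
        rw [ENNReal.toReal_add hc₁top (by norm_num)]
        norm_num [hc₁Rdef]
      rw [h3]; linarith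
    · rw [min_eq_left hgw.le]
      have hgtop : g w ≠ ⊤ := (hgw.trans_le le_top).ne
      have h1 : φ₂ ≤ g w + ENNReal.ofReal (cR * w^(-ρ)) := (min_le_left _ _).trans (hphile w hw)
      have h2 := (ENNReal.toReal_le_toReal hφ₂top
        (ENNReal.add_ne_top.mpr ⟨hgtop, ENNReal.ofReal_ne_top⟩)).mpr h1
      rw [ENNReal.toReal_add hgtop ENNReal.ofReal_ne_top, ENNReal.toReal_ofReal hrw] at h2
      simp only [hΔdef]; linarith
  -- parameters
  set τ := min 1 (γ / (8*(cR+1))) with hτdef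
  have hτ0 : 0 < τ := lt_min one_pos (by positivity)
  have hτ1 : τ ≤ 1 := min_le_left _ _
  have hτγ : τ ≤ γ/8 := by
    have h1 : τ ≤ γ/(8*(cR+1)) := min_le_right _ _
    have h2 : γ/(8*(cR+1)) ≤ γ/8 := by
      apply div_le_div_of_nonneg_left hγ0.le (by norm_num)
      linarith only [hcR0]
    linarith
  have hcτγ : cR * τ ≤ γ/8 := by
    have h1 : τ ≤ γ/(8*(cR+1)) := min_le_right _ _
    have h2 : cR * τ ≤ cR * (γ/(8*(cR+1))) := by
      apply mul_le_mul_of_nonneg_left h1 hcR0.le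
    have h3 : cR * (γ/(8*(cR+1))) ≤ γ/8 := by
      rw [mul_div_assoc', div_le_div_iff₀ (by positivity) (by norm_num : (0:ℝ) < 8)]
      nlinarith [hγ0, hcR0]
    linarith
  set β₀ := (c₂ + γ/8) / (c₂ + 3*γ/8) with hβ₀def
  have hβ₀pos : 0 < β₀ := by positivity
  have hβ₀lt : β₀ < 1 := by
    rw [hβ₀def, div_lt_one (by positivity)]; linarith
  have hβ₀eq : β₀ * (c₂ + 3*γ/8) = c₂ + γ/8 := by
    rw [hβ₀def]; field_simp
  set r := (β₀+1)/2 with hrdef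
  have hβ₀r : β₀ < r := by rw [hrdef]; linarith
  have hr1 : r < 1 := by rw [hrdef]; linarith
  have hrpos : 0 < r := by rw [hrdef]; linarith
  set β := (β₀+r)/2 with hβdef
  have hβ₀β : β₀ ≤ β := by rw [hβdef]; linarith
  have hββr : β < r := by rw [hβdef]; linarith
  have hβpos : 0 < β := by rw [hβdef]; linarith
  have hβ1 : β < 1 := by linarith
  set s := r / β with hsdef
  have hspos : 0 < s := by positivity
  have hs1 : 1 < s := by rw [hsdef, lt_div_iff₀ hβpos]; linarith
  have hβs : β * s = r := by rw [hsdef]; field_simp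
  set w₀ := (c₂ + cR)/cR with hw₀def
  have hw₀pos : 0 < w₀ := by positivity
  have hw₀1 : 1 < w₀ := by rw [hw₀def, lt_div_iff₀ hcR0]; linarith
  have hcw₀ : cR * w₀ = c₂ + cR := by rw [hw₀def]; field_simp
  -- exponent helpers
  set σ := s ^ ρ⁻¹ with hσdef
  have hσpos : 0 < σ := Real.rpow_pos_of_pos hspos _
  have hσ1 : 1 < σ := (Real.one_lt_rpow_iff_of_pos hspos).mpr (Or.inl ⟨hs1, by positivity⟩)
  have hσρ : σ ^ (-ρ) = s⁻¹ := by
    rw [hσdef, ← Real.rpow_mul hspos.le,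
      show ρ⁻¹ * -ρ = -1 by field_simp, Real.rpow_neg_one]
  set p := r ^ (-ρ⁻¹) with hpdef
  have hppos : 0 < p := Real.rpow_pos_of_pos hrpos _
  have hp1 : 1 < p := by
    rw [hpdef, Real.one_lt_rpow_iff_of_pos hrpos]
    exact Or.inr ⟨hr1, by simp; positivity⟩
  have hpρ : p ^ (-ρ) = r := by
    rw [hpdef, ← Real.rpow_mul hrpos.le]
    rw [show -ρ⁻¹ * -ρ = 1 by field_simp, Real.rpow_one]
  set y₀ := w₀ ^ (-ρ⁻¹) with hy₀def
  have hy₀pos : 0 < y₀ := Real.rpow_pos_of_pos hw₀pos _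
  have hy₀ρ : y₀ ^ (-ρ) = w₀ := by
    rw [hy₀def, ← Real.rpow_mul hw₀pos.le]
    rw [show -ρ⁻¹ * -ρ = 1 by field_simp, Real.rpow_one]
  set ystar := (Δ / (2*cR*s)) ^ (-ρ⁻¹) with hystardef
  have hystarpos : 0 < ystar := Real.rpow_pos_of_pos (by positivity) _
  have hystarρ : ystar ^ (-ρ) = Δ / (2*cR*s) := by
    rw [hystardef, ← Real.rpow_mul (by positivity)]
    rw [show -ρ⁻¹ * -ρ = 1 by field_simp, Real.rpow_one]
  clear_value cR c₁R γ c₂ Δ τ β₀ r β s w₀ σ p y₀ ystar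
  -- grid
  set y : ℕ → ℝ := fun k => y₀ * p ^ k with hydef
  have hy_pos : ∀ k, 0 < y k := fun k => by positivity
  have hy0 : y 0 = y₀ := by simp [hydef]
  have hy_ge : ∀ k, y₀ ≤ y k := by
    intro k
    have h1 : 1 ≤ p ^ k := one_le_pow₀ hp1.le
    calc y₀ = y₀ * 1 := by ring
      _ ≤ y₀ * p ^ k := mul_le_mul_of_nonneg_left h1 hy₀pos.le
  have hy_mono : ∀ j k : ℕ, j ≤ k → y j ≤ y k := by
    intro j k hjk
    have h1 := pow_le_pow_right₀ hp1.le hjk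
    simp only [hydef]
    exact mul_le_mul_of_nonneg_left h1 hy₀pos.le
  have hy_rpow : ∀ k : ℕ, (y k) ^ (-ρ) = y₀ ^ (-ρ) * r ^ k := by
    intro k
    have h1 : (y k) ^ (-ρ) = y₀ ^ (-ρ) * (p ^ k : ℝ) ^ (-ρ) := by
      rw [hydef]
      exact Real.mul_rpow hy₀pos.le (pow_nonneg hppos.le k)
    rw [h1, ← Real.rpow_natCast p k, ← Real.rpow_mul hppos.le,
      mul_comm (k:ℝ) (-ρ), Real.rpow_mul hppos.le, hpρ, Real.rpow_natCast]
  have hy_succ_rpow : ∀ k : ℕ, (y (k+1)) ^ (-ρ) = r * (y k) ^ (-ρ) := by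
    intro k
    rw [hy_rpow, hy_rpow, pow_succ]
    ring
  have hy_rpow_pos : ∀ k, 0 < (y k) ^ (-ρ) := fun k => Real.rpow_pos_of_pos (hy_pos k) _
  have hy_rpow_le : ∀ k, (y k) ^ (-ρ) ≤ w₀ := by
    intro k
    have := rpow_neg_anti hy₀pos (hy_ge k) hρ.le
    rw [hy₀ρ] at this
    exact this
  obtain ⟨K, hK⟩ : ∃ K : ℕ, ystar ≤ y K := by
    obtain ⟨K, hK⟩ := pow_unbounded_of_one_lt (ystar / y₀) hp1
    refine ⟨K, ?_⟩
    rw [div_lt_iff₀ hy₀pos] at hK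
    simp only [hydef]
    linarith [hK]
  have hyK : cR * (s * (y K) ^ (-ρ)) ≤ Δ/2 := by
    have h1 : (y K) ^ (-ρ) ≤ ystar ^ (-ρ) := rpow_neg_anti hystarpos hK hρ.le
    rw [hystarρ] at h1
    have h2 : cR * (s * (Δ / (2*cR*s))) = Δ/2 := by
      field_simp
    have h3 : cR * (s * (y K) ^ (-ρ)) ≤ cR * (s * (Δ / (2*cR*s))) := by
      apply mul_le_mul_of_nonneg_left _ hcR0.le
      exact mul_le_mul_of_nonneg_left h1 hspos.le
    linarith
  -- truncated exponents
  set t : ℕ → ℝ := fun k => (min (g (y k / σ)) (c₁+2)).toReal with htdef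
  have hbudget_t : ∀ k, c₁R + Δ ≤ t k + cR * (s * (y k) ^ (-ρ)) := by
    intro k
    have hz : 0 < y k / σ := div_pos (hy_pos k) hσpos
    have h1 := budget _ hz
    have hrw : (y k / σ) ^ (-ρ) = s * (y k) ^ (-ρ) := by
      rw [div_eq_mul_inv, Real.mul_rpow (hy_pos k).le (inv_nonneg.mpr hσpos.le),
        Real.inv_rpow hσpos.le, hσρ, inv_inv]
      ring
    rw [hrw] at h1
    linarith
  -- the three real inequalities
  have hc₁Rτ : c₂ + 3*γ/8 ≤ c₁R - τ := by
    have : c₁R = cR + γ := by simp only [hγdef]; ring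
    rw [this, hc₂def]
    linarith
  have hc₁Rτ0 : 0 ≤ c₁R - τ := by linarith
  have chain : ∀ u : ℝ, c₁R - τ ≤ u → c₂ + γ/8 ≤ β * u := by
    intro u hu
    have h1 : β₀ * (c₂ + 3*γ/8) ≤ β₀ * (c₁R - τ) :=
      mul_le_mul_of_nonneg_left hc₁Rτ hβ₀pos.le
    have h2 : β₀ * (c₁R - τ) ≤ β * (c₁R - τ) :=
      mul_le_mul_of_nonneg_right hβ₀β hc₁Rτ0
    have h3 : β * (c₁R - τ) ≤ β * u := mul_le_mul_of_nonneg_left hu hβpos.le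
    linarith [hβ₀eq]
  have first_ineq : c₂ ≤ cR * ((y 0) ^ (-ρ) - τ) := by
    rw [hy0, hy₀ρ]
    have h1 : cR * τ ≤ cR * 1 := mul_le_mul_of_nonneg_left hτ1 hcR0.le
    have h2 : cR * (w₀ - τ) = cR * w₀ - cR * τ := by ring
    linarith [hcw₀]
  have key_ineq : ∀ k : ℕ, c₂ ≤ max (t k - τ) 0 * β + cR * (r * (y k) ^ (-ρ) - τ) := by
    intro k
    set m := (y k) ^ (-ρ) with hmdef
    have hm : 0 < m := hy_rpow_pos k
    have hb : c₁R ≤ t k + cR * (s * m) := by linarith [hbudget_t k]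
    rcases le_or_gt (t k - τ) 0 with hcase | hcase
    · rw [max_eq_right hcase]
      have h1 : c₁R - τ ≤ cR * (s * m) := by linarith
      have h2 : β * (cR * (s * m)) = cR * (r * m) := by rw [← hβs]; ring
      have h3 := chain _ h1
      rw [h2] at h3
      have h4 : cR * (r*m - τ) = cR * (r*m) - cR * τ := by ring
      linarith
    · rw [max_eq_left hcase.le]
      have h1 : c₁R - τ ≤ t k + cR * (s * m) - τ := by linarith
      have h3 := chain _ h1
      have h2 : β * (t k + cR * (s*m) - τ) = (t k - τ) * β + cR * (r * m) := by
        rw [← hβs]; ring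
      rw [h2] at h3
      have h4 : cR * (r*m - τ) = cR * (r*m) - cR * τ := by ring
      linarith
  have tail_ineq : c₂ ≤ max (t K - τ) 0 * β := by
    have h1 : c₁R + Δ/2 ≤ t K := by linarith [hbudget_t K, hyK]
    have h2 : 0 < t K - τ := by linarith
    rw [max_eq_left h2.le]
    have h3 := chain (t K - τ) (by linarith)
    linarith
  -- H tends to infinity
  have hHtop : Tendsto H (nhdsWithin 0 (Set.Ioi 0)) atTop := hH.tendsto_atTop
  have hHpos := hH.pos
  have hH_anti' : ∀ {u v : ℝ}, 0 < u → u ≤ v → H v ≤ H u := by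
    intro u v hu huv
    rcases eq_or_lt_of_le huv with rfl | h
    · exact le_rfl
    · exact (hH.anti (mem_Ioi.mpr hu) (mem_Ioi.mpr (hu.trans h)) h).le
  -- eventual facts
  have hE2all : ∀ᶠ ε in nhdsWithin 0 (Set.Ioi 0),
      ∀ j ∈ Finset.range (K+1), ((y j) ^ (-ρ) - τ) * H ε ≤ H (y j * ε) := by
    rw [Filter.eventually_all_finset]
    intro j _
    have h1 := (hH.rv (y j) (mem_Ioi.mpr (hy_pos j))).eventually_const_lt
      (show (y j) ^ (-ρ) - τ < (y j) ^ (-ρ) by linarith)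
    filter_upwards [h1, self_mem_nhdsWithin] with ε h2 h3
    have hHε : 0 < H ε := hHpos ε h3
    rw [lt_div_iff₀ hHε] at h2
    exact h2.le
  have hE3all : ∀ᶠ ε in nhdsWithin 0 (Set.Ioi 0), β * H ε ≤ H (σ * ε) := by
    have hβσ : β < σ ^ (-ρ) := by
      rw [hσρ, inv_eq_one_div, lt_div_iff₀ hspos, hβs]
      exact hr1
    have h1 := (hH.rv σ (mem_Ioi.mpr hσpos)).eventually_const_lt hβσ
    filter_upwards [h1, self_mem_nhdsWithin] with ε h2 h3
    have hHε : 0 < H ε := hHpos ε h3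
    rw [lt_div_iff₀ hHε] at h2
    exact h2.le
  have hE4all : ∀ᶠ ε in nhdsWithin 0 (Set.Ioi 0),
      ∀ k ∈ Finset.range (K+1),
        μ {ω | ε * A ω * (y k / σ) + B ω < ε} ≤
          ENNReal.ofReal (Real.exp (-(max (t k - τ) 0 * H ε))) := by
    rw [Filter.eventually_all_finset]
    intro k _
    rcases le_or_gt (t k - τ) 0 with hcase | hcase
    · refine Filter.Eventually.of_forall (fun ε => ?_)
      rw [max_eq_right hcase]
      simp only [zero_mul, neg_zero, Real.exp_zero, ENNReal.ofReal_one]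
      exact prob_le_one
    · have hz : 0 < y k / σ := div_pos (hy_pos k) hσpos
      have hgt := hg (y k / σ) hz.le
      have htne : min (g (y k / σ)) (c₁+2) ≠ ⊤ := ne_top_of_le_ne_top hc₁2top (min_le_right _ _)
      have hlt : ENNReal.ofReal (t k - τ) < g (y k / σ) := by
        have h1 : ENNReal.ofReal (t k - τ) < ENNReal.ofReal (t k) := by
          rw [ENNReal.ofReal_lt_ofReal_iff (by linarith)]
          linarith
        refine h1.trans_le ?_
        have h2 : ENNReal.ofReal (t k) = min (g (y k / σ)) (c₁+2) :=
          ENNReal.ofReal_toReal htne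
        rw [h2]
        exact min_le_left _ _
      have h2 := hgt.eventually_const_lt hlt
      filter_upwards [h2, self_mem_nhdsWithin] with ε h3 h4
      have hHε : 0 < H ε := hHpos ε h4
      rw [max_eq_left hcase.le]
      apply measure_le_of_negLog_ge prob_le_one
      rw [ENNReal.ofReal_mul (by linarith)]
      rcases eq_or_ne (negLog (μ {ω | ε * A ω * (y k / σ) + B ω < ε})) ⊤ with htop' | htop'
      · rw [htop']; exact le_top
      · have hne : ENNReal.ofReal (H ε) ≠ 0 := by
          simp only [ne_eq, ENNReal.ofReal_eq_zero, not_le]; exact hHε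
        exact (ENNReal.le_div_iff_mul_le (Or.inl hne) (Or.inl ENNReal.ofReal_ne_top)).mp h3.le
  have hE5all : ∀ᶠ ε in nhdsWithin 0 (Set.Ioi 0), Real.log ((K:ℝ)+2) ≤ γ/2 * H ε := by
    have h1 := hHtop.eventually_ge_atTop (Real.log ((K:ℝ)+2) / (γ/2))
    filter_upwards [h1] with ε h2
    rw [div_le_iff₀ (by positivity)] at h2
    linarith
  obtain ⟨δ, hδ0, hδ⟩ : ∃ δ, 0 < δ ∧ ∀ ε, ε ∈ Ioo 0 δ →
      ((∀ j ∈ Finset.range (K+1), ((y j) ^ (-ρ) - τ) * H ε ≤ H (y j * ε)) ∧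
        β * H ε ≤ H (σ * ε)) ∧
      ((∀ k ∈ Finset.range (K+1),
          μ {ω | ε * A ω * (y k / σ) + B ω < ε} ≤
            ENNReal.ofReal (Real.exp (-(max (t k - τ) 0 * H ε)))) ∧
        Real.log ((K:ℝ)+2) ≤ γ/2 * H ε) := by
    rcases mem_nhdsGT_iff_exists_Ioo_subset.mp
      (((hE2all.and hE3all).and (hE4all.and hE5all))) with ⟨u, hu, hsub⟩
    exact ⟨u, hu, fun ε hε => hsub hε⟩
  set x₀ := δ / (2*σ) with hx₀def
  have hx₀pos : 0 < x₀ := by positivity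
  have hσx₀ : σ * x₀ = δ/2 := by
    rw [hx₀def]
    field_simp
  have hx₀δ : x₀ < δ := by
    rw [hx₀def, div_lt_iff₀ (by positivity)]
    have h2 : (1:ℝ) < 2*σ := by linarith only [hσ1]
    have h3 := mul_lt_mul_of_pos_left h2 hδ0
    rw [mul_one] at h3
    linarith only [h3]
  have hx₀mem : ∀ x, 0 < x → x < x₀ → x ∈ Ioo 0 δ ∧ σ * x ∈ Ioo 0 δ := by
    intro x hx hxx₀
    have h1 : σ * x < σ * x₀ := by
      exact mul_lt_mul_of_pos_left hxx₀ hσpos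
    refine ⟨⟨hx, by linarith⟩, ⟨by positivity, by
      rw [hσx₀] at h1; linarith⟩⟩
  -- the CDF
  have hHx₀pos : 0 < H x₀ := hHpos _ (mem_Ioi.mpr hx₀pos)
  set κ := Real.exp (cR * H x₀) with hκdef
  have hκ1 : 1 ≤ κ := Real.one_le_exp (by positivity)
  set Fr : ℝ → ℝ := fun u => if u ≤ 0 then 0 else min 1 (Real.exp (cR * (H x₀ - H u)))
    with hFrdef
  have hFr_nonneg : ∀ u, 0 ≤ Fr u := by
    intro u
    rw [hFrdef]
    dsimp only
    split
    · exact le_rfl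
    · exact le_min zero_le_one (Real.exp_pos _).le
  have hFr_le_one : ∀ u, Fr u ≤ 1 := by
    intro u
    rw [hFrdef]
    dsimp only
    split
    · exact zero_le_one
    · exact min_le_left _ _
  have hFr_mono : Monotone Fr := by
    intro u v huv
    rw [hFrdef]
    dsimp only
    by_cases hu : u ≤ 0
    · rw [if_pos hu]
      split
      · exact le_rfl
      · exact le_min zero_le_one (Real.exp_pos _).le
    · push_neg at hu
      rw [if_neg (not_le.mpr hu), if_neg (not_le.mpr (hu.trans_le huv))]
      refine min_le_min le_rfl (Real.exp_le_exp.mpr ?_)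
      have h := hH_anti' hu huv
      exact mul_le_mul_of_nonneg_left (by linarith) hcR0.le
  have hFr_eq_exp : ∀ u, 0 < u → u ≤ x₀ → Fr u = Real.exp (cR * (H x₀ - H u)) := by
    intro u h1 h2
    rw [hFrdef]
    dsimp only
    rw [if_neg (not_le.mpr h1), min_eq_right]
    rw [Real.exp_le_one_iff]
    have h := hH_anti' h1 h2
    exact mul_nonpos_iff.mpr (Or.inl ⟨hcR0.le, by linarith⟩)
  have hFr_eq_one : ∀ u, x₀ ≤ u → Fr u = 1 := by
    intro u h
    rw [hFrdef]
    dsimp only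
    rw [if_neg (not_le.mpr (hx₀pos.trans_le h)), min_eq_left]
    apply Real.one_le_exp
    have h := hH_anti' hx₀pos h
    exact mul_nonneg hcR0.le (by linarith)
  have hFr_le_κexp : ∀ u, Fr u ≤ κ * Real.exp (-(cR * H u)) := by
    intro u
    by_cases hu : u ≤ 0
    · have : Fr u = 0 := by rw [hFrdef]; dsimp only; rw [if_pos hu]
      rw [this]
      positivity
    · push_neg at hu
      have h1 : Fr u ≤ Real.exp (cR * (H x₀ - H u)) := by
        rw [hFrdef]; dsimp only; rw [if_neg (not_le.mpr hu)]; exact min_le_right _ _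
      have h2 : Real.exp (cR * (H x₀ - H u)) = κ * Real.exp (-(cR * H u)) := by
        rw [hκdef, ← Real.exp_add]
        ring_nf
      linarith
  have hFr_contAt : ∀ u, 0 < u → ContinuousAt Fr u := by
    intro u hu
    have hout : Continuous (fun w : ℝ => min 1 (Real.exp (cR * (H x₀ - w)))) := by
      apply Continuous.min continuous_const
      exact Real.continuous_exp.comp (continuous_const.mul (continuous_const.sub continuous_id))
    have hHc : ContinuousAt H u :=
      hH.contOn.continuousAt (isOpen_Ioi.mem_nhds (mem_Ioi.mpr hu))
    have hGc : ContinuousAt (fun v => min 1 (Real.exp (cR * (H x₀ - H v)))) u :=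
      ContinuousAt.comp (x := u) (g := fun w : ℝ => min 1 (Real.exp (cR * (H x₀ - w))))
        hout.continuousAt hHc
    apply hGc.congr
    filter_upwards [isOpen_Ioi.mem_nhds (mem_Ioi.mpr hu)] with v hv
    rw [hFrdef]
    dsimp only
    rw [if_neg (not_le.mpr hv)]
  have hFr_rc : ∀ u, ContinuousWithinAt Fr (Ici u) u := by
    intro u
    rcases lt_trichotomy u 0 with hu | rfl | hu
    · have : ContinuousAt Fr u := by
        apply continuousAt_const.congr
        filter_upwards [isOpen_Iio.mem_nhds (mem_Iio.mpr hu)] with v hv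
        rw [hFrdef]
        dsimp only
        rw [if_pos (le_of_lt hv)]
      exact this.continuousWithinAt
    · have hFr0 : Fr 0 = 0 := by rw [hFrdef]; dsimp only; rw [if_pos le_rfl]
      rw [ContinuousWithinAt, hFr0]
      have hsplit : (Ici (0:ℝ)) = {0} ∪ Ioi 0 := by
        ext v
        simp [le_iff_lt_or_eq, eq_comm, or_comm]
      rw [hsplit, nhdsWithin_union]
      rw [Filter.tendsto_sup]
      constructor
      · rw [nhdsWithin_singleton, Filter.tendsto_pure_left]
        intro s hs
        rw [hFr0]
        exact mem_of_mem_nhds hs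
      · apply squeeze_zero' (Filter.Eventually.of_forall (fun v => hFr_nonneg v))
        · filter_upwards [self_mem_nhdsWithin] with v hv
          have : Fr v ≤ Real.exp (cR * (H x₀ - H v)) := by
            rw [hFrdef]; dsimp only; rw [if_neg (not_le.mpr hv)]; exact min_le_right _ _
          exact this
        · have harg : Tendsto (fun v => cR * (H x₀ - H v)) (nhdsWithin 0 (Set.Ioi 0)) atBot := by
            apply Filter.Tendsto.const_mul_atBot hcR0
            apply Filter.tendsto_atBot_add_const_left
            exact (tendsto_neg_atTop_atBot.comp hHtop)
          exact Real.tendsto_exp_atBot.comp harg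
    · exact (hFr_contAt u hu).continuousWithinAt
  set F : StieltjesFunction ℝ := ⟨Fr, hFr_mono, hFr_rc⟩ with hFdef
  have h_bot : Tendsto Fr atBot (nhds 0) := by
    apply Tendsto.congr' _ tendsto_const_nhds
    filter_upwards [eventually_le_atBot (0:ℝ)] with u hu
    rw [hFrdef]; dsimp only; rw [if_pos hu]
  have h_top : Tendsto Fr atTop (nhds 1) := by
    apply Tendsto.congr' _ tendsto_const_nhds
    filter_upwards [eventually_ge_atTop x₀] with u hu
    exact (hFr_eq_one u hu).symm
  set ν₂ := F.measure with hν₂def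
  have hν₂prob : IsProbabilityMeasure ν₂ := F.isProbabilityMeasure h_bot h_top
  have hν₂Iic : ∀ u, ν₂ (Iic u) = ENNReal.ofReal (Fr u) := by
    intro u
    rw [hν₂def, F.measure_Iic h_bot]
    simp
    rfl
  have hν₂Iio : ∀ u, 0 < u → ν₂ (Iio u) = ENNReal.ofReal (Fr u) := by
    intro u hu
    have hsing : ν₂ {u} = 0 := by
      rw [hν₂def, F.measure_singleton]
      have hll : Function.leftLim Fr u = Fr u :=
        leftLim_eq_of_tendsto
          ((hFr_contAt u hu).continuousWithinAt)
      have hcoe : (↑F : ℝ → ℝ) = Fr := rfl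
      rw [hcoe, hll]
      simp
    have h1 : ν₂ (Iic u) ≤ ν₂ (Iio u) + ν₂ {u} := by
      rw [← Set.Iio_union_right]
      exact measure_union_le _ _
    rw [hsing, add_zero, hν₂Iic] at h1
    refine le_antisymm ?_ h1
    rw [← hν₂Iic]
    exact measure_mono Iio_subset_Iic_self
  -- {A=0 and B=0} is mu-null
  have hAB0 : μ {ω | A ω = 0 ∧ B ω = 0} = 0 := by
    by_contra hne
    have hg2 := hg 2 (by norm_num)
    have hub : ∀ᶠ ε in nhdsWithin 0 (Set.Ioi 0),
        negLog (μ {ω | ε * A ω * 2 + B ω < ε}) / ENNReal.ofReal (H ε) ≤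
          negLog (μ {ω | A ω = 0 ∧ B ω = 0}) / ENNReal.ofReal (H ε) := by
      filter_upwards [self_mem_nhdsWithin] with ε hε
      refine ENNReal.div_le_div_right (negLog_anti (measure_mono ?_)) _
      rintro ω ⟨ha0, hb0⟩
      simp only [mem_setOf_eq, ha0, hb0, mul_zero, zero_mul, add_zero]
      exact hε
    have hmt : negLog (μ {ω | A ω = 0 ∧ B ω = 0}) ≠ ⊤ := by
      unfold negLog
      rw [if_neg hne]
      exact ENNReal.ofReal_ne_top
    have htop2 : Tendsto (fun ε => ENNReal.ofReal (H ε)) (nhdsWithin 0 (Set.Ioi 0)) (nhds ⊤) :=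
      ENNReal.tendsto_ofReal_atTop.comp hHtop
    have hinv : Tendsto (fun ε => (ENNReal.ofReal (H ε))⁻¹) (nhdsWithin 0 (Set.Ioi 0))
        (nhds 0) := by
      have := ENNReal.tendsto_inv_iff.mpr htop2
      simpa using this
    have h0 : Tendsto (fun ε => negLog (μ {ω | A ω = 0 ∧ B ω = 0}) / ENNReal.ofReal (H ε))
        (nhdsWithin 0 (Set.Ioi 0)) (nhds 0) := by
      simp only [div_eq_mul_inv]
      have := ENNReal.Tendsto.const_mul hinv (Or.inr hmt)
      simpa using this
    have hg20 : g 2 = 0 := le_antisymm (le_of_tendsto_of_tendsto hg2 h0 hub) (zero_le)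
    have hφ2 := hphile 2 (by norm_num)
    rw [hg20, zero_add] at hφ2
    have hlt2 : ENNReal.ofReal (cR * 2 ^ (-ρ)) < c := by
      rw [hcofReal, ENNReal.ofReal_lt_ofReal_iff hcR0]
      have h21 : (2:ℝ) ^ (-ρ) < 1 :=
        Real.rpow_lt_one_of_one_lt_of_neg one_lt_two (by linarith)
      exact mul_lt_of_lt_one_right hcR0 h21
    exact absurd (hc.trans_le hφ2) (not_lt.mpr hlt2.le)
  -- the product space
  set μ₁ := μ.map (fun ω => (A ω, B ω)) with hμ₁def
  have hABmeas : Measurable (fun ω => (A ω, B ω)) := hA.prodMk hB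
  haveI hμ₁prob : IsProbabilityMeasure μ₁ := Measure.isProbabilityMeasure_map hABmeas.aemeasurable
  have hμ₁set : ∀ (S : Set (ℝ×ℝ)), MeasurableSet S →
      μ₁ S = μ ((fun ω => (A ω, B ω)) ⁻¹' S) := fun S hS => Measure.map_apply hABmeas hS
  set ν := μ₁.prod ν₂ with hνdef
  haveI hνprob : IsProbabilityMeasure ν := by rw [hνdef]; infer_instance
  refine ⟨(ℝ × ℝ) × ℝ, inferInstance, ν, hνprob,
    fun ω' => ω'.1.1, fun ω' => ω'.1.2, fun ω' => ω'.2,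
    measurable_fst.fst, measurable_fst.snd, measurable_snd, ?_, ?_, ?_, ?_, ?_⟩
  · -- Z nonneg a.e.
    rw [ae_iff]
    have hset : {ω' : (ℝ×ℝ)×ℝ | ¬ 0 ≤ ω'.2} = univ ×ˢ Iio 0 := by
      ext ω'
      simp [not_le]
    rw [hset, hνdef, Measure.prod_prod, measure_univ, one_mul]
    have h1 : ν₂ (Iio 0) ≤ ν₂ (Iic 0) := measure_mono Iio_subset_Iic_self
    rw [hν₂Iic 0] at h1
    have hFr0 : Fr 0 = 0 := by rw [hFrdef]; dsimp only; rw [if_pos le_rfl]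
    rw [hFr0] at h1
    exact le_antisymm (by simpa using h1) (zero_le)
  · -- IdentDistrib
    refine ⟨(measurable_fst.fst.prodMk measurable_fst.snd).aemeasurable,
      hABmeas.aemeasurable, ?_⟩
    have h1 : (fun ω' : (ℝ×ℝ)×ℝ => (ω'.1.1, ω'.1.2)) = Prod.fst := by
      funext ω'
      simp
    rw [h1, hνdef, Measure.map_fst_prod, measure_univ, one_smul]
  · -- IndepFun
    rw [indepFun_iff_map_prod_eq_prod_map_map measurable_snd.aemeasurable
      (measurable_fst.fst.prodMk measurable_fst.snd).aemeasurable]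
    have h1 : (fun ω' : (ℝ×ℝ)×ℝ => (ω'.2, (ω'.1.1, ω'.1.2))) = Prod.swap := by
      funext ω'
      simp [Prod.swap]
    have h2 : (fun ω' : (ℝ×ℝ)×ℝ => (ω'.1.1, ω'.1.2)) = Prod.fst := by
      funext ω'
      simp
    rw [h1, h2, hνdef, Measure.prod_swap, Measure.map_fst_prod, Measure.map_snd_prod,
      measure_univ, measure_univ, one_smul, one_smul]
  · -- IED asymptotics
    have hev6 : (fun ε => ENNReal.ofReal (1 - H x₀ / H ε)) =ᶠ[nhdsWithin 0 (Set.Ioi 0)]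
        (fun ε => negLog (ν {ω' : (ℝ×ℝ)×ℝ | ω'.2 < ε}) / (c * ENNReal.ofReal (H ε))) := by
      filter_upwards [Ioo_mem_nhdsGT_of_mem (show (0:ℝ) ∈ Ico 0 x₀ from ⟨le_rfl, hx₀pos⟩)]
        with ε hε
      obtain ⟨hε0, hεx₀⟩ := hε
      have hHεx₀ : H x₀ < H ε := hH.anti (mem_Ioi.mpr hε0) (mem_Ioi.mpr hx₀pos) hεx₀
      have hHε0 : 0 < H ε := hHpos ε (mem_Ioi.mpr hε0)
      have hset : {ω' : (ℝ×ℝ)×ℝ | ω'.2 < ε} = univ ×ˢ Iio ε := by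
        ext ω'
        simp
      rw [hset, hνdef, Measure.prod_prod, measure_univ, one_mul, hν₂Iio ε hε0,
        hFr_eq_exp ε hε0 hεx₀.le,
        show cR * (H x₀ - H ε) = -(cR * (H ε - H x₀)) by ring,
        negLog_ofReal_exp, hcofReal,
        ← ENNReal.ofReal_mul hcR0.le,
        ← ENNReal.ofReal_div_of_pos (by positivity)]
      congr 1
      field_simp
    have h1 : Tendsto (fun ε => H x₀ / H ε) (nhdsWithin 0 (Set.Ioi 0)) (nhds 0) :=
      Filter.Tendsto.div_atTop tendsto_const_nhds hHtop
    have h2 : Tendsto (fun ε => 1 - H x₀ / H ε) (nhdsWithin 0 (Set.Ioi 0)) (nhds 1) := by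
      have := tendsto_const_nhds (x := (1:ℝ)) (f := nhdsWithin (0:ℝ) (Set.Ioi 0)) |>.sub h1
      simpa using this
    exact Filter.Tendsto.congr' hev6 (by simpa using ENNReal.tendsto_ofReal h2)
  · -- stochastic domination
    intro x
    have hRHS : ν {ω' : (ℝ×ℝ)×ℝ | ω'.2 ≤ x} = ENNReal.ofReal (Fr x) := by
      have hset : {ω' : (ℝ×ℝ)×ℝ | ω'.2 ≤ x} = univ ×ˢ Iic x := by
        ext ω'
        simp
      rw [hset, hνdef, Measure.prod_prod, measure_univ, one_mul, hν₂Iic]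
    rcases le_or_gt x 0 with hx0 | hx0
    · -- LHS is null
      have hbound : ν {ω' : (ℝ×ℝ)×ℝ | ω'.1.1 * ω'.2 + ω'.1.2 ≤ x} = 0 := by
        have hsub : {ω' : (ℝ×ℝ)×ℝ | ω'.1.1 * ω'.2 + ω'.1.2 ≤ x} ⊆
            ({pp : ℝ×ℝ | ¬ (0 ≤ pp.1 ∧ 0 ≤ pp.2 ∧ ¬(pp.1 = 0 ∧ pp.2 = 0))} ×ˢ univ) ∪
              (univ ×ˢ Iic (0:ℝ)) := by
          intro ω' hω'
          by_cases hz : ω'.2 ≤ 0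
          · exact Or.inr ⟨mem_univ _, hz⟩
          · push_neg at hz
            left
            refine ⟨fun hgs => ?_, mem_univ _⟩
            obtain ⟨ha, hb, hne2⟩ := hgs
            simp only [mem_setOf_eq] at hω'
            have hmul : 0 ≤ ω'.1.1 * ω'.2 := mul_nonneg ha hz.le
            have hb0 : ω'.1.2 = 0 := le_antisymm (by linarith) hb
            have ha1 : ω'.1.1 * ω'.2 ≤ 0 := by linarith
            have ha' : ω'.1.1 ≤ 0 := by
              by_contra hcon
              push_neg at hcon
              exact absurd ha1 (not_le.mpr (mul_pos hcon hz))
            exact hne2 ⟨le_antisymm ha' ha, hb0⟩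
        apply measure_mono_null hsub
        apply measure_union_null
        · rw [hνdef, Measure.prod_prod, measure_univ, mul_one]
          have hmeas : MeasurableSet {pp : ℝ×ℝ | ¬ (0 ≤ pp.1 ∧ 0 ≤ pp.2 ∧
              ¬(pp.1 = 0 ∧ pp.2 = 0))} := by
            apply MeasurableSet.compl
            refine MeasurableSet.inter ?_ (MeasurableSet.inter ?_ ?_)
            · exact measurable_fst measurableSet_Ici
            · exact measurable_snd measurableSet_Ici
            · apply MeasurableSet.compl
              exact (measurable_fst (measurableSet_singleton 0)).inter
                (measurable_snd (measurableSet_singleton 0))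
          rw [hμ₁set _ hmeas]
          have hae : ∀ᵐ ω ∂μ, 0 ≤ A ω ∧ 0 ≤ B ω ∧ ¬(A ω = 0 ∧ B ω = 0) := by
            refine hA0.and (hB0.and ?_)
            rw [ae_iff]
            simpa using hAB0
          exact ae_iff.mp hae
        · rw [hνdef, Measure.prod_prod, measure_univ, one_mul, hν₂Iic]
          have hFr0 : Fr 0 = 0 := by rw [hFrdef]; dsimp only; rw [if_pos le_rfl]
          simp [hFr0]
      rw [hbound]
      exact zero_le
    rcases lt_or_ge x x₀ with hxx₀ | hxx₀
    · -- main estimate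
      obtain ⟨hxδ, hσxδ⟩ := hx₀mem x hx0 hxx₀
      obtain ⟨⟨hE2, hE3⟩, _, hlog⟩ := hδ x hxδ
      obtain ⟨_, hE4σ, _⟩ := hδ (σ*x) hσxδ
      have hHx : 0 < H x := hHpos x (mem_Ioi.mpr hx0)
      set EB := ENNReal.ofReal (κ * Real.exp (-(c₂ * H x))) with hEBdef
      have hμfac : ∀ k, k ∈ Finset.range (K+1) →
          μ₁ {pp : ℝ×ℝ | pp.1 * (x * y k) + pp.2 ≤ x} ≤
            ENNReal.ofReal (Real.exp (-(max (t k - τ) 0 * (β * H x)))) := by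
        intro k hk
        have hmeas1 : MeasurableSet {pp : ℝ×ℝ | (σ*x) * pp.1 * (y k / σ) + pp.2 < σ*x} := by
          apply measurableSet_lt _ measurable_const
          exact ((measurable_fst.const_mul _).mul_const _).add measurable_snd
        have hsub2 : {pp : ℝ×ℝ | pp.1 * (x * y k) + pp.2 ≤ x} ⊆
            {pp : ℝ×ℝ | (σ*x) * pp.1 * (y k / σ) + pp.2 < σ*x} := by
          intro pp hpp
          simp only [mem_setOf_eq] at hpp ⊢
          have he : (σ*x) * pp.1 * (y k / σ) = pp.1 * (x * y k) := by
            field_simp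
          rw [he]
          have hxσ : x < σ * x := by
            have h := mul_lt_mul_of_pos_right hσ1 hx0
            rw [one_mul] at h
            exact h
          linarith
        have h1 := measure_mono (μ := μ₁) hsub2
        have h2 : μ₁ {pp : ℝ×ℝ | (σ*x) * pp.1 * (y k / σ) + pp.2 < σ*x} =
            μ {ω | (σ*x) * A ω * (y k / σ) + B ω < σ*x} := hμ₁set _ hmeas1
        have h3 := hE4σ k hk
        have h4 : max (t k - τ) 0 * (β * H x) ≤ max (t k - τ) 0 * H (σ*x) :=
          mul_le_mul_of_nonneg_left hE3 (le_max_right _ _)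
        calc μ₁ {pp : ℝ×ℝ | pp.1 * (x * y k) + pp.2 ≤ x}
            ≤ μ₁ {pp : ℝ×ℝ | (σ*x) * pp.1 * (y k / σ) + pp.2 < σ*x} := h1
          _ = μ {ω | (σ*x) * A ω * (y k / σ) + B ω < σ*x} := h2
          _ ≤ ENNReal.ofReal (Real.exp (-(max (t k - τ) 0 * H (σ*x)))) := h3
          _ ≤ _ := by
              apply ENNReal.ofReal_le_ofReal
              apply Real.exp_le_exp.mpr
              linarith
      have hνfac : ∀ j, j ∈ Finset.range (K+1) →
          ν₂ (Iic (x * y j)) ≤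
            ENNReal.ofReal (κ * Real.exp (-(cR * (((y j) ^ (-ρ) - τ) * H x)))) := by
        intro j hj
        rw [hν₂Iic]
        apply ENNReal.ofReal_le_ofReal
        have h1 : Fr (x * y j) ≤ κ * Real.exp (-(cR * H (x * y j))) := hFr_le_κexp _
        have h2 := hE2 j hj
        rw [mul_comm (y j) x] at h2
        have h3 : cR * (((y j)^(-ρ) - τ) * H x) ≤ cR * H (x * y j) :=
          mul_le_mul_of_nonneg_left h2 hcR0.le
        have h4 : Real.exp (-(cR * H (x * y j))) ≤
            Real.exp (-(cR * (((y j)^(-ρ) - τ) * H x))) :=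
          Real.exp_le_exp.mpr (by linarith)
        calc Fr (x * y j) ≤ κ * Real.exp (-(cR * H (x * y j))) := h1
          _ ≤ _ := mul_le_mul_of_nonneg_left h4 (by positivity)
      have hT0 : ν (univ ×ˢ Iic (x * y 0)) ≤ EB := by
        rw [hνdef, Measure.prod_prod, measure_univ, one_mul]
        refine (hνfac 0 (by simp)).trans ?_
        apply ENNReal.ofReal_le_ofReal
        apply mul_le_mul_of_nonneg_left _ (by positivity : (0:ℝ) ≤ κ)
        apply Real.exp_le_exp.mpr
        have h5 := mul_le_mul_of_nonneg_right first_ineq hHx.le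
        rw [← mul_assoc]
        linarith
      have hTk : ∀ k ∈ Finset.range K,
          ν ({pp : ℝ×ℝ | pp.1 * (x * y k) + pp.2 ≤ x} ×ˢ Iic (x * y (k+1))) ≤ EB := by
        intro k hk
        rw [Finset.mem_range] at hk
        have hk1 : k ∈ Finset.range (K+1) := Finset.mem_range.mpr (by omega)
        have hk2 : k+1 ∈ Finset.range (K+1) := Finset.mem_range.mpr (by omega)
        rw [hνdef, Measure.prod_prod]
        calc μ₁ {pp : ℝ×ℝ | pp.1 * (x * y k) + pp.2 ≤ x} * ν₂ (Iic (x * y (k+1))) ≤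
            ENNReal.ofReal (Real.exp (-(max (t k - τ) 0 * (β * H x)))) *
              ENNReal.ofReal (κ * Real.exp (-(cR * (((y (k+1)) ^ (-ρ) - τ) * H x)))) :=
              mul_le_mul' (hμfac k hk1) (hνfac (k+1) hk2)
          _ = ENNReal.ofReal (κ * Real.exp (-(max (t k - τ) 0 * (β * H x)) +
                -(cR * (((y (k+1)) ^ (-ρ) - τ) * H x)))) := by
              rw [← ENNReal.ofReal_mul (Real.exp_pos _).le, Real.exp_add]
              ring_nf
          _ ≤ EB := by
              apply ENNReal.ofReal_le_ofReal
              apply mul_le_mul_of_nonneg_left _ (by positivity : (0:ℝ) ≤ κ)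
              apply Real.exp_le_exp.mpr
              have h6 : c₂ * H x ≤
                  (max (t k - τ) 0 * β + cR * (r * (y k)^(-ρ) - τ)) * H x :=
                mul_le_mul_of_nonneg_right (key_ineq k) hHx.le
              rw [hy_succ_rpow k]
              ring_nf at h6 ⊢
              linarith
      have hTK : ν ({pp : ℝ×ℝ | pp.1 * (x * y K) + pp.2 ≤ x} ×ˢ (univ : Set ℝ)) ≤ EB := by
        rw [hνdef, Measure.prod_prod, measure_univ, mul_one]
        refine (hμfac K (by simp)).trans ?_
        apply ENNReal.ofReal_le_ofReal
        have h7 : c₂ * H x ≤ max (t K - τ) 0 * (β * H x) := by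
          have h := mul_le_mul_of_nonneg_right tail_ineq hHx.le
          rw [mul_assoc] at h
          exact h
        calc Real.exp (-(max (t K - τ) 0 * (β * H x))) ≤ Real.exp (-(c₂ * H x)) :=
            Real.exp_le_exp.mpr (by linarith)
          _ ≤ κ * Real.exp (-(c₂ * H x)) :=
            le_mul_of_one_le_left (Real.exp_pos _).le hκ1
      have hcover : {ω' : (ℝ×ℝ)×ℝ | ω'.1.1 * ω'.2 + ω'.1.2 ≤ x} ∩
          {ω' : (ℝ×ℝ)×ℝ | 0 ≤ ω'.1.1} ⊆
          (univ ×ˢ Iic (x * y 0)) ∪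
            (({pp : ℝ×ℝ | pp.1 * (x * y K) + pp.2 ≤ x} ×ˢ (univ : Set ℝ)) ∪
              ⋃ k ∈ Finset.range K,
                ({pp : ℝ×ℝ | pp.1 * (x * y k) + pp.2 ≤ x} ×ˢ Iic (x * y (k+1)))) := by
        rintro ω' ⟨hle, hA0'⟩
        simp only [mem_setOf_eq] at hle hA0'
        rcases le_or_gt ω'.2 (x * y 0) with h0 | h0
        · exact Or.inl ⟨mem_univ _, h0⟩
        rcases lt_or_ge (x * y K) ω'.2 with hKlt | hKle
        · refine Or.inr (Or.inl ⟨?_, mem_univ _⟩)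
          simp only [mem_setOf_eq]
          linarith [mul_le_mul_of_nonneg_left hKlt.le hA0']
        · refine Or.inr (Or.inr ?_)
          have hPex : ∃ n, ω'.2 ≤ x * y n := ⟨K, hKle⟩
          have hk₀ := Nat.find_spec hPex
          have hk₀pos : Nat.find hPex ≠ 0 := by
            intro h
            rw [h] at hk₀
            exact absurd hk₀ (not_le.mpr h0)
          obtain ⟨k, hkeq⟩ := Nat.exists_eq_succ_of_ne_zero hk₀pos
          have hklt : ¬ ω'.2 ≤ x * y k := Nat.find_min hPex (by omega)
          have hkK : k < K := by
            by_contra hge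
            push_neg at hge
            exact hklt (hKle.trans (mul_le_mul_of_nonneg_left (hy_mono K k hge) hx0.le))
          rw [hkeq] at hk₀
          refine mem_biUnion (Finset.mem_range.mpr hkK) ⟨?_, hk₀⟩
          simp only [mem_setOf_eq]
          push_neg at hklt
          linarith [mul_le_mul_of_nonneg_left hklt.le hA0']
      have hcompl : ν ({ω' : (ℝ×ℝ)×ℝ | 0 ≤ ω'.1.1}ᶜ) = 0 := by
        have hseteq : ({ω' : (ℝ×ℝ)×ℝ | 0 ≤ ω'.1.1}ᶜ) = {pp : ℝ×ℝ | ¬ 0 ≤ pp.1} ×ˢ univ := by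
          ext ω'
          simp
        rw [hseteq, hνdef, Measure.prod_prod, measure_univ, mul_one]
        have hmeas : MeasurableSet {pp : ℝ×ℝ | ¬ 0 ≤ pp.1} := by
          apply MeasurableSet.compl
          exact measurable_fst measurableSet_Ici
        rw [hμ₁set _ hmeas]
        exact ae_iff.mp hA0
      have hcast : ((K:ℝ≥0∞)+2) = ENNReal.ofReal ((K:ℝ)+2) := by
        rw [ENNReal.ofReal_add (Nat.cast_nonneg K) (by norm_num), ENNReal.ofReal_natCast]
        norm_num
      have hfinal : EB + (EB + (K:ℝ≥0∞) * EB) ≤ ENNReal.ofReal (Fr x) := by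
        rw [hFr_eq_exp x hx0 hxx₀.le]
        calc EB + (EB + (K:ℝ≥0∞)*EB) = ((K:ℝ≥0∞)+2) * EB := by ring
          _ = ENNReal.ofReal (((K:ℝ)+2) * (κ * Real.exp (-(c₂ * H x)))) := by
              rw [hcast, hEBdef, ← ENNReal.ofReal_mul (by positivity)]
          _ ≤ ENNReal.ofReal (Real.exp (cR * (H x₀ - H x))) := by
              apply ENNReal.ofReal_le_ofReal
              have hK2 : (K:ℝ)+2 ≤ Real.exp (γ/2 * H x) := by
                rw [← Real.exp_log (show (0:ℝ) < (K:ℝ)+2 by positivity)]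
                exact Real.exp_le_exp.mpr hlog
              have hstep : ((K:ℝ)+2) * (κ * Real.exp (-(c₂ * H x))) ≤
                  Real.exp (γ/2 * H x) * (κ * Real.exp (-(c₂ * H x))) :=
                mul_le_mul_of_nonneg_right hK2 (by positivity)
              have heq2 : Real.exp (γ/2 * H x) * (κ * Real.exp (-(c₂ * H x))) =
                  Real.exp (cR * (H x₀ - H x)) := by
                rw [hκdef, ← Real.exp_add, ← Real.exp_add]
                congr 1
                rw [hc₂def]
                ring
              linarith
      rw [hRHS]
      calc ν {ω' : (ℝ×ℝ)×ℝ | ω'.1.1 * ω'.2 + ω'.1.2 ≤ x}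
          ≤ ν ({ω' : (ℝ×ℝ)×ℝ | ω'.1.1 * ω'.2 + ω'.1.2 ≤ x} ∩
              {ω' : (ℝ×ℝ)×ℝ | 0 ≤ ω'.1.1}) + ν ({ω' : (ℝ×ℝ)×ℝ | 0 ≤ ω'.1.1}ᶜ) := by
            refine (measure_mono ?_).trans (measure_union_le _ _)
            intro ω' hω'
            by_cases hg1 : 0 ≤ ω'.1.1
            · exact Or.inl ⟨hω', hg1⟩
            · exact Or.inr hg1
        _ = ν ({ω' : (ℝ×ℝ)×ℝ | ω'.1.1 * ω'.2 + ω'.1.2 ≤ x} ∩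
              {ω' : (ℝ×ℝ)×ℝ | 0 ≤ ω'.1.1}) := by rw [hcompl, add_zero]
        _ ≤ ν ((univ ×ˢ Iic (x * y 0)) ∪
            (({pp : ℝ×ℝ | pp.1 * (x * y K) + pp.2 ≤ x} ×ˢ (univ : Set ℝ)) ∪
              ⋃ k ∈ Finset.range K,
                ({pp : ℝ×ℝ | pp.1 * (x * y k) + pp.2 ≤ x} ×ˢ Iic (x * y (k+1))))) :=
            measure_mono hcover
        _ ≤ ν (univ ×ˢ Iic (x * y 0)) +
            (ν ({pp : ℝ×ℝ | pp.1 * (x * y K) + pp.2 ≤ x} ×ˢ (univ : Set ℝ)) +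
              ν (⋃ k ∈ Finset.range K,
                ({pp : ℝ×ℝ | pp.1 * (x * y k) + pp.2 ≤ x} ×ˢ Iic (x * y (k+1))))) := by
            refine (measure_union_le _ _).trans ?_
            exact add_le_add_right (measure_union_le _ _) _
        _ ≤ EB + (EB + (K:ℝ≥0∞) * EB) := by
            refine add_le_add hT0 (add_le_add hTK ?_)
            refine (measure_biUnion_finset_le _ _).trans ?_
            calc ∑ k ∈ Finset.range K,
                ν ({pp : ℝ×ℝ | pp.1 * (x * y k) + pp.2 ≤ x} ×ˢ Iic (x * y (k+1)))
                ≤ ∑ _k ∈ Finset.range K, EB := Finset.sum_le_sum (fun k hk => hTk k hk)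
              _ = (K:ℝ≥0∞) * EB := by
                  rw [Finset.sum_const, Finset.card_range, nsmul_eq_mul]
        _ ≤ ENNReal.ofReal (Fr x) := hfinal
    · -- x beyond x₀
      rw [hRHS, hFr_eq_one x hxx₀]
      simpa using prob_le_one
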